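/- Let ⟨A,·⟩ be a semigroup which is an Abelian algebra and satisfies condition (*). Then for any a ∈ A·A there exist idempotents e,f ∈ A such that a ∈ X_e ∩ Y_f, and X_e ∩ Y_f = Z_{e·f}. -/
import Mathlib


universe u

/-- Terms (polynomial operations) of a groupoid `⟨A, op⟩` in `n` variables,
built from variables, constants and the binary operation. -/
inductive GTerm (A : Type u) (n : ℕ) : Type u where
  | var : Fin n → GTerm A n
  | const : A → GTerm A n
  | mul : GTerm A n → GTerm A n → GTerm A n

/-- Evaluation of a term under the binary operation `op` and an assignment of variables. -/
def GTerm.eval {A : Type u} (op : A → A → A) : {n : ℕ} → GTerm A n → (Fin n → A) → A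
  | _, .var i, v => v i
  | _, .const a, _ => a
  | _, .mul s t, v => op (GTerm.eval op s v) (GTerm.eval op t v)

/-- A groupoid `⟨A, op⟩` is an Abelian algebra: for every polynomial operation
`t(x, y₁, …, yₙ)` and all elements `u, v, c₁, …, cₙ, d₁, …, dₙ`,
`t(u, c̄) = t(u, d̄)` implies `t(v, c̄) = t(v, d̄)`. -/
def IsAbelianGroupoid {A : Type u} (op : A → A → A) : Prop :=
  ∀ (n : ℕ) (t : GTerm A (n + 1)) (u v : A) (c d : Fin n → A),
    t.eval op (Fin.cons u c) = t.eval op (Fin.cons u d) →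
    t.eval op (Fin.cons v c) = t.eval op (Fin.cons v d)

/-- The set `A·A = {x·y : x, y ∈ A}` of products in the groupoid `⟨A, op⟩`. -/
def prodSet {A : Type u} (op : A → A → A) : Set A := {z : A | ∃ x y : A, z = op x y}

/-- Condition (*): either `b·c·A = b·A` and `A·b·c = A·c` for all `b, c ∈ A`,
or the set `A·A` is finite. -/
def CondStar {A : Type u} (op : A → A → A) : Prop :=
  (∀ b c : A, {z : A | ∃ x : A, z = op (op b c) x} = {z : A | ∃ x : A, z = op b x} ∧
              {z : A | ∃ x : A, z = op x (op b c)} = {z : A | ∃ x : A, z = op x c}) ∨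
  (prodSet op).Finite

/-- The relation `X`: `x X y ⟺ ∃ z, z·x = x ∧ z·y = y ∧ z·z = z`. -/
def relX {A : Type u} (op : A → A → A) (x y : A) : Prop :=
  ∃ z : A, op z x = x ∧ op z y = y ∧ op z z = z

/-- The relation `Y`: `x Y y ⟺ ∃ z, x·z = x ∧ y·z = y ∧ z·z = z`. -/
def relY {A : Type u} (op : A → A → A) (x y : A) : Prop :=
  ∃ z : A, op x z = x ∧ op y z = y ∧ op z z = z

/-- Powers: `pw op a n = a^(n+1)`. -/
def pw {A : Type u} (op : A → A → A) (a : A) : ℕ → A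
  | 0 => a
  | n+1 => op a (pw op a n)

theorem pw_add {A : Type u} (op : A → A → A)
    (hassoc : ∀ a b c : A, op (op a b) c = op a (op b c)) (a : A) :
    ∀ m n, pw op a (m + n + 1) = op (pw op a m) (pw op a n) := by
  intro m
  induction m with
  | zero =>
    intro n
    rw [Nat.zero_add]
    rfl
  | succ m ih =>
    intro n
    have h : m + 1 + n + 1 = (m + n + 1) + 1 := by omega
    rw [h]
    show op a (pw op a (m + n + 1)) = _
    rw [ih n, ← hassoc]
    rfl

/-- Left cancellation-type consequence of abelianness. -/
theorem abelian_left {A : Type u} (op : A → A → A) (hab : IsAbelianGroupoid op) :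
    ∀ u c d : A, op u c = op u d → ∀ v, op v c = op v d := by
  intro u c d h v
  have key : ∀ (x y : A),
      GTerm.eval op (.mul (.var 0) (.var 1)) (Fin.cons x (fun _ : Fin 1 => y)) = op x y := by
    intro x y
    simp only [GTerm.eval]
    rw [show (1 : Fin 2) = Fin.succ 0 from rfl, Fin.cons_zero, Fin.cons_succ]
  have := hab 1 (.mul (.var 0) (.var 1)) u v (fun _ => c) (fun _ => d)
  rw [key, key, key, key] at this
  exact this h

/-- Right cancellation-type consequence of abelianness. -/
theorem abelian_right {A : Type u} (op : A → A → A) (hab : IsAbelianGroupoid op) :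
    ∀ u c d : A, op c u = op d u → ∀ v, op c v = op d v := by
  intro u c d h v
  have key : ∀ (x y : A),
      GTerm.eval op (.mul (.var 1) (.var 0)) (Fin.cons x (fun _ : Fin 1 => y)) = op y x := by
    intro x y
    simp only [GTerm.eval]
    rw [show (1 : Fin 2) = Fin.succ 0 from rfl, Fin.cons_zero, Fin.cons_succ]
  have := hab 1 (.mul (.var 1) (.var 0)) u v (fun _ => c) (fun _ => d)
  rw [key, key, key, key] at this
  exact this h

/-- In an Abelian semigroup satisfying condition (*), every `a ∈ A·A` lies in
`X_e ∩ Y_f` for some idempotents `e, f`, and `X_e ∩ Y_f = Z_{e·f}`. -/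
theorem stmt_14 {A : Type u} (op : A → A → A)
    (hassoc : ∀ a b c : A, op (op a b) c = op a (op b c))
    (hab : IsAbelianGroupoid op) (hstar : CondStar op) :
    ∀ a ∈ prodSet op, ∃ e f : A, op e e = e ∧ op f f = f ∧
      a ∈ {x : A | x ∈ prodSet op ∧ relX op x e} ∩ {x : A | x ∈ prodSet op ∧ relY op x f} ∧
      {x : A | x ∈ prodSet op ∧ relX op x e} ∩ {x : A | x ∈ prodSet op ∧ relY op x f}
        = {x : A | x ∈ prodSet op ∧ relX op x (op e f) ∧ relY op x (op e f)} := by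
  have hL := abelian_left op hab
  have hR := abelian_right op hab
  intro a ha
  obtain ⟨b, c, hbc⟩ := ha
  have ha : a ∈ prodSet op := ⟨b, c, hbc⟩
  -- Existence of idempotents e, f with e·a = a and a·f = a.
  have hexists : ∃ e f : A, op e e = e ∧ op f f = f ∧ op e a = a ∧ op a f = a := by
    rcases hstar with hstar | hfin
    · -- case (*) first alternative
      obtain ⟨h1, h2⟩ := hstar b c
      -- a ∈ A·c = A·(b·c) gives z with z·a = a
      have haz : a ∈ {z : A | ∃ x : A, z = op x (op b c)} := by
        rw [h2]; exact ⟨b, hbc⟩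
      obtain ⟨z, hz⟩ := haz
      rw [← hbc] at hz
      have hza : op z a = a := hz.symm
      -- a ∈ b·A = (b·c)·A gives w with a·w = a
      have haww : a ∈ {z : A | ∃ x : A, z = op (op b c) x} := by
        rw [h1]; exact ⟨c, hbc⟩
      obtain ⟨w, hw⟩ := haww
      rw [← hbc] at hw
      have haw : op a w = a := hw.symm
      -- e := z·z
      have hz2 : op z a = op (op z z) a := by
        rw [hza, hassoc, hza, hza]
      have h3 : ∀ v, op z v = op (op z z) v := hR a z (op z z) hz2
      have hez : op (op z z) z = op z z := (h3 z).symm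
      have hee : op (op z z) (op z z) = op z z := by
        have : op (op z z) (op z z) = op (op (op z z) z) z := (hassoc (op z z) z z).symm
        rw [this, hez, hez]
      have hea : op (op z z) a = a := by rw [← h3 a, hza]
      -- f := w·w
      have hw2 : op a w = op a (op w w) := by
        rw [haw, ← hassoc, haw, haw]
      have h4 : ∀ v, op v w = op v (op w w) := hL a w (op w w) hw2
      have hwf : op w (op w w) = op w w := (h4 w).symm
      have hff : op (op w w) (op w w) = op w w := by
        have h7 : op (op w w) (op w w) = op w (op w (op w w)) := hassoc w w (op w w)
        rw [h7, hwf, hwf]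
      have haf : op a (op w w) = a := by rw [← h4 a, haw]
      exact ⟨op z z, op w w, hee, hff, hea, haf⟩
    · -- finite case
      have hmem : ∀ n, pw op a n ∈ prodSet op := by
        intro n
        cases n with
        | zero => exact ha
        | succ n => exact ⟨a, pw op a n, rfl⟩
      haveI := hfin.to_subtype
      obtain ⟨i0, j0, hij, hpij0⟩ :=
        Finite.exists_ne_map_eq_of_infinite (fun n : ℕ => (⟨pw op a n, hmem n⟩ : prodSet op))
      have hpij1 : pw op a i0 = pw op a j0 := congrArg Subtype.val hpij0
      obtain ⟨i, j, hlt, hpij⟩ : ∃ i j : ℕ, i < j ∧ pw op a i = pw op a j := by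
        rcases lt_or_gt_of_ne hij with h | h
        · exact ⟨i0, j0, h, hpij1⟩
        · exact ⟨j0, i0, h, hpij1.symm⟩
      set k := j - i with hk
      have hkpos : 0 < k := by omega
      have hj : j = i + k := by omega
      rw [hj] at hpij
      -- step 1 : ∀ v, a·v = (pw op a k)·v
      have hv : ∀ v, op a v = op (pw op a k) v := by
        cases i with
        | zero =>
          intro v
          have h0 : a = pw op a k := by
            have : pw op a 0 = pw op a (0 + k) := hpij
            rw [Nat.zero_add] at this
            exact this
          rw [← h0]
        | succ m =>
          have e1 : pw op a (m + 1) = op (pw op a 0) (pw op a m) := by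
            have := pw_add op hassoc a 0 m
            rw [Nat.zero_add] at this
            exact this
          have e2 : pw op a (m + 1 + k) = op (pw op a k) (pw op a m) := by
            have := pw_add op hassoc a k m
            rw [show k + m + 1 = m + 1 + k by omega] at this
            exact this
          have h5 : op (pw op a 0) (pw op a m) = op (pw op a k) (pw op a m) := by
            rw [← e1, ← e2]; exact hpij
          exact hR (pw op a m) a (pw op a k) h5
      -- step 2 : a = pw op a k
      have hkq : pw op a k = op (pw op a (k - 1)) a := by
        have := pw_add op hassoc a (k - 1) 0
        rw [show k - 1 + 0 + 1 = k by omega] at this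
        exact this
      have hac : op a c = op (pw op a k) c := hv c
      have hlhs : op a c = op b (op c c) := by rw [hbc, hassoc]
      have hrhs : op (pw op a k) c = op (op (pw op a (k - 1)) b) (op c c) := by
        rw [hkq, hassoc, hlhs, ← hassoc]
      have hcc : op b (op c c) = op (op (pw op a (k - 1)) b) (op c c) := by
        rw [← hlhs, ← hrhs]; exact hac
      have hbv : ∀ v, op b v = op (op (pw op a (k - 1)) b) v :=
        hR (op c c) b (op (pw op a (k - 1)) b) hcc
      have hak : a = pw op a k := by
        have := hbv c
        rw [← hbc, hassoc, ← hbc, ← hkq] at this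
        exact this
      -- shift lemma : pw op a (k + n) = pw op a n
      have hshift : ∀ n, pw op a (k + n) = pw op a n := by
        intro n
        induction n with
        | zero =>
          show pw op a (k + 0) = a
          rw [Nat.add_zero]
          exact hak.symm
        | succ n ih =>
          have h6 : pw op a (k + (n + 1)) = op a (pw op a (k + n)) := rfl
          rw [h6, ih]; rfl
      -- e = f = pw op a (k - 1)
      have hqq : op (pw op a (k - 1)) (pw op a (k - 1)) = pw op a (k - 1) := by
        have := pw_add op hassoc a (k - 1) (k - 1)
        rw [show k - 1 + (k - 1) + 1 = k + (k - 1) by omega, hshift (k - 1)] at this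
        exact this.symm
      have hqa : op (pw op a (k - 1)) a = a := by rw [← hkq, ← hak]
      have haq : op a (pw op a (k - 1)) = a := by
        have := pw_add op hassoc a 0 (k - 1)
        rw [show 0 + (k - 1) + 1 = k by omega] at this
        exact this.symm.trans hak.symm
      exact ⟨pw op a (k - 1), pw op a (k - 1), hqq, hqq, hqa, haq⟩
  obtain ⟨e, f, hee, hff, hea, haf⟩ := hexists
  refine ⟨e, f, hee, hff, ?_, ?_⟩
  · exact ⟨⟨ha, e, hea, hee, hee⟩, ⟨ha, f, haf, hff, hff⟩⟩
  · ext x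
    simp only [Set.mem_inter_iff, Set.mem_setOf_eq]
    constructor
    · rintro ⟨⟨hx, z, hzx, hze, hzz⟩, ⟨_, w, hxw, hfw, hww⟩⟩
      refine ⟨hx, ⟨z, hzx, ?_, hzz⟩, ⟨w, hxw, ?_, hww⟩⟩
      · rw [← hassoc, hze]
      · rw [hassoc, hfw]
    · rintro ⟨hx, ⟨z, hzx, hzef, hzz⟩, ⟨w, hxw, hefw, hww⟩⟩
      refine ⟨⟨hx, z, hzx, ?_, hzz⟩, ⟨hx, w, hxw, ?_, hww⟩⟩
      · -- from z·(e·f) = e·f deduce z·e = e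
        have h1 : op (op z e) f = op e f := by rw [hassoc]; exact hzef
        have h2 : ∀ v, op (op z e) v = op e v := hR f (op z e) e h1
        have h3 := h2 e
        rw [hassoc, hee] at h3
        exact h3
      · -- from (e·f)·w = e·f deduce f·w = f
        have h1 : op e (op f w) = op e f := by rw [← hassoc]; exact hefw
        have h2 : ∀ v, op v (op f w) = op v f := hL e (op f w) f h1
        have h3 := h2 f
        rw [← hassoc, hff] at h3
        exact h3
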